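/- Let I ⊆ ℝ be an open interval, f : I → ℝ positive and differentiable, and a > 0, c₂ ≠ 0, H₀ real constants with 4H₀² + a²c₂² = a². Define φ : I × ℝ → ℝ⁴ by φ(u,v) = (u, sin(a v)/(a f(u)), cos(a v)/(a f(u)), 2H₀/(a² c₂ f(u))). Then, with respect to the Robertson–Walker metric which at a point with first coordinate t assigns to tangent vectors X, Y the value ⟨X,Y⟩ = −X₁Y₁ + f(t)²(X₂Y₂ + X₃Y₃ + X₄Y₄), the partial derivatives of φ satisfy at every (u,v): ⟨∂φ/∂v, ∂φ/∂v⟩ = 1, ⟨∂φ/∂u, ∂φ/∂v⟩ = 0, and ⟨∂φ/∂u, ∂φ/∂u⟩ = (f'(u)² − a²c₂²f(u)²)/(a²c₂²f(u)²). In particular, φ is space-like at u precisely when f'(u)² > a²c₂²f(u)². -/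

import Mathlib

open Real

/-- The Robertson–Walker metric of `L⁴₁(f,0)` at a point with first coordinate `t`:
`⟨X,Y⟩ = -X₁Y₁ + f(t)²(X₂Y₂ + X₃Y₃ + X₄Y₄)`. -/
noncomputable def rwMetric4 (f : ℝ → ℝ) (t : ℝ) (X Y : Fin 4 → ℝ) : ℝ :=
  -(X 0 * Y 0) + f t ^ 2 * (X 1 * Y 1 + X 2 * Y 2 + X 3 * Y 3)

/-- The rotational surface of Theorem 4.1 in `L⁴₁(f,0)`. -/
noncomputable def phiRW4 (f : ℝ → ℝ) (a c₂ H₀ : ℝ) (u v : ℝ) : Fin 4 → ℝ :=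
  ![u,
    Real.sin (a * v) / (a * f u),
    Real.cos (a * v) / (a * f u),
    2 * H₀ / (a ^ 2 * c₂ * f u)]

/-!
Both partial derivatives of `φ` are explicit: `φ_v = (0, cos(av)/f, -sin(av)/f, 0)` and
`φ_u = (1, -(f'/f²)·(sin(av)/a, cos(av)/a, 2H₀/(a²c₂)))`. Hence `⟨φ_v, φ_v⟩ = 1` because
`sin² + cos² = 1`, the mixed terms cancel, and `⟨φ_u, φ_u⟩ = -1 + (f'²/(a²f²))(1 + 4H₀²/(a²c₂²))`,
where the relation `4H₀² + a²c₂² = a²` turns the last factor into `1/c₂²`.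
-/

theorem deriv_apply_of_hasDerivAt {ι : Type*} [Fintype ι] {φ : ℝ → ι → ℝ} {φ' : ι → ℝ} {x : ℝ}
    (h : HasDerivAt φ φ' x) : (fun i => deriv (fun y => φ y i) x) = φ' :=
  funext fun i => (hasDerivAt_pi.1 h i).deriv

theorem HasDerivAt.const_div_const_mul {f : ℝ → ℝ} {f' u : ℝ} (hf : HasDerivAt f f' u)
    (b c : ℝ) (hb : b ≠ 0) (hfu : f u ≠ 0) :
    HasDerivAt (fun x => c / (b * f x)) (-(c * f') / (b * f u ^ 2)) u :=
  ((hasDerivAt_const u c).div (hf.const_mul b) (mul_ne_zero hb hfu)).congr_deriv (by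
    field_simp
    ring)

noncomputable def phiRW4DerivU (f : ℝ → ℝ) (a c₂ H₀ u v : ℝ) : Fin 4 → ℝ :=
  ![1,
    -(Real.sin (a * v) * deriv f u) / (a * f u ^ 2),
    -(Real.cos (a * v) * deriv f u) / (a * f u ^ 2),
    -(2 * H₀ * deriv f u) / (a ^ 2 * c₂ * f u ^ 2)]

noncomputable def phiRW4DerivV (f : ℝ → ℝ) (a u v : ℝ) : Fin 4 → ℝ :=
  ![0, Real.cos (a * v) / f u, -Real.sin (a * v) / f u, 0]

theorem hasDerivAt_phiRW4_u {f : ℝ → ℝ} {a c₂ u : ℝ} (hf : DifferentiableAt ℝ f u)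
    (ha : a ≠ 0) (hc₂ : c₂ ≠ 0) (hfu : f u ≠ 0) (H₀ v : ℝ) :
    HasDerivAt (fun u' => phiRW4 f a c₂ H₀ u' v) (phiRW4DerivU f a c₂ H₀ u v) u := by
  refine hasDerivAt_pi.2 fun i => ?_
  fin_cases i
  · exact hasDerivAt_id u
  · exact hf.hasDerivAt.const_div_const_mul a _ ha hfu
  · exact hf.hasDerivAt.const_div_const_mul a _ ha hfu
  · exact hf.hasDerivAt.const_div_const_mul (a ^ 2 * c₂) _ (by positivity) hfu

theorem hasDerivAt_phiRW4_v (f : ℝ → ℝ) {a : ℝ} (ha : a ≠ 0) (c₂ H₀ u v : ℝ) :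
    HasDerivAt (fun v' => phiRW4 f a c₂ H₀ u v') (phiRW4DerivV f a u v) v := by
  have hav : HasDerivAt (fun v' => a * v') a v := by
    simpa using (hasDerivAt_id v).const_mul a
  refine hasDerivAt_pi.2 fun i => ?_
  fin_cases i
  · exact hasDerivAt_const v u
  · exact (hav.sin.div_const (a * f u)).congr_deriv (by
      simp [phiRW4DerivV, mul_comm a (f u), mul_div_mul_right _ _ ha])
  · exact (hav.cos.div_const (a * f u)).congr_deriv (by
      simp [phiRW4DerivV, neg_div, mul_comm a (f u), mul_div_mul_right _ _ ha])
  · exact hasDerivAt_const v _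

theorem rwMetric4_phiRW4DerivV_self {f : ℝ → ℝ} {u : ℝ} (hfu : f u ≠ 0) (a v : ℝ) :
    rwMetric4 f u (phiRW4DerivV f a u v) (phiRW4DerivV f a u v) = 1 := by
  simp only [rwMetric4, phiRW4DerivV, Matrix.cons_val]
  field_simp
  linear_combination cos_sq_add_sin_sq (a * v)

theorem rwMetric4_phiRW4DerivU_phiRW4DerivV (f : ℝ → ℝ) (a c₂ H₀ u v : ℝ) :
    rwMetric4 f u (phiRW4DerivU f a c₂ H₀ u v) (phiRW4DerivV f a u v) = 0 := by
  simp only [rwMetric4, phiRW4DerivU, phiRW4DerivV, Matrix.cons_val]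
  ring

theorem rwMetric4_phiRW4DerivU_self {f : ℝ → ℝ} {a c₂ H₀ u : ℝ} (ha : a ≠ 0) (hc₂ : c₂ ≠ 0)
    (hrel : 4 * H₀ ^ 2 + a ^ 2 * c₂ ^ 2 = a ^ 2) (hfu : f u ≠ 0) (v : ℝ) :
    rwMetric4 f u (phiRW4DerivU f a c₂ H₀ u v) (phiRW4DerivU f a c₂ H₀ u v) =
      (deriv f u ^ 2 - a ^ 2 * c₂ ^ 2 * f u ^ 2) / (a ^ 2 * c₂ ^ 2 * f u ^ 2) := by
  simp only [rwMetric4, phiRW4DerivU, Matrix.cons_val]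
  field_simp
  linear_combination
    deriv f u ^ 2 * a ^ 2 * c₂ ^ 2 * sin_sq_add_cos_sq (a * v) + deriv f u ^ 2 * hrel

/-- First fundamental form of the rotational surface `φ` in `L⁴₁(f,0)`:
`⟨φ_v,φ_v⟩ = 1`, `⟨φ_u,φ_v⟩ = 0` and
`⟨φ_u,φ_u⟩ = (f'² - a²c₂²f²)/(a²c₂²f²)`; in particular `φ` is space-like at `u`
precisely when `f'(u)² > a²c₂²f(u)²`. -/
theorem phiRW4_first_fundamental_form (A B : ℝ) (f : ℝ → ℝ) (a c₂ H₀ : ℝ)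
    (ha : 0 < a) (hc₂ : c₂ ≠ 0)
    (hrel : 4 * H₀ ^ 2 + a ^ 2 * c₂ ^ 2 = a ^ 2)
    (hfpos : ∀ u ∈ Set.Ioo A B, 0 < f u)
    (hfdiff : ∀ u ∈ Set.Ioo A B, DifferentiableAt ℝ f u) :
    ∀ u ∈ Set.Ioo A B, ∀ v : ℝ,
      rwMetric4 f u (fun i => deriv (fun v' => phiRW4 f a c₂ H₀ u v' i) v)
        (fun i => deriv (fun v' => phiRW4 f a c₂ H₀ u v' i) v) = 1 ∧
      rwMetric4 f u (fun i => deriv (fun u' => phiRW4 f a c₂ H₀ u' v i) u)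
        (fun i => deriv (fun v' => phiRW4 f a c₂ H₀ u v' i) v) = 0 ∧
      rwMetric4 f u (fun i => deriv (fun u' => phiRW4 f a c₂ H₀ u' v i) u)
        (fun i => deriv (fun u' => phiRW4 f a c₂ H₀ u' v i) u) =
        (deriv f u ^ 2 - a ^ 2 * c₂ ^ 2 * f u ^ 2) / (a ^ 2 * c₂ ^ 2 * f u ^ 2) ∧
      (0 < rwMetric4 f u (fun i => deriv (fun u' => phiRW4 f a c₂ H₀ u' v i) u)
        (fun i => deriv (fun u' => phiRW4 f a c₂ H₀ u' v i) u) ↔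
        deriv f u ^ 2 > a ^ 2 * c₂ ^ 2 * f u ^ 2) := by
  intro u hu v
  have hfu : f u ≠ 0 := (hfpos u hu).ne'
  rw [deriv_apply_of_hasDerivAt (hasDerivAt_phiRW4_v f ha.ne' c₂ H₀ u v),
    deriv_apply_of_hasDerivAt (hasDerivAt_phiRW4_u (hfdiff u hu) ha.ne' hc₂ hfu H₀ v),
    rwMetric4_phiRW4DerivU_self ha.ne' hc₂ hrel hfu v]
  refine ⟨rwMetric4_phiRW4DerivV_self hfu a v, rwMetric4_phiRW4DerivU_phiRW4DerivV f a c₂ H₀ u v,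
    rfl, ?_⟩
  rw [lt_div_iff₀ (by positivity), zero_mul, sub_pos]
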